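/- arXiv:1205.4161 — 2 statements merged into one kernel-verified Lean document; each statement's English description precedes it below -/
import Mathlib

section
/- The path P_6 with 6 edges does not divide the 3-dimensional hypercube Q_3. -/
/-!
If `H` divides `G`, every vertex of odd degree in `G` has odd degree in some piece, and the number
of pieces is `e(G) / e(H)`; hence `o(G) * e(H) ≤ o(H) * e(G)`, where `o` counts the vertices of odd
degree and `e` the edges. For `H = P₆` and `G = Q₃`, whose vertices all have degree `3`, this reads
`8 * 6 ≤ 2 * 12`.
-/

open SimpleGraph

/-- `H` divides `G`: the edge set of `G` can be partitioned into edge sets of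
subgraphs of `G`, each isomorphic to `H`. -/
def GraphDivides {α β : Type} (H : SimpleGraph α) (G : SimpleGraph β) : Prop :=
  ∃ (ι : Type) (f : ι → G.Subgraph),
    (∀ i, Nonempty (H ≃g (f i).coe)) ∧
    ∀ e ∈ G.edgeSet, ∃! i, e ∈ (f i).edgeSet

/-- The `n`-dimensional hypercube graph. -/
def cube (n : ℕ) : SimpleGraph (Fin n → ZMod 2) where
  Adj x y := hammingDist x y = 1
  symm := ⟨fun x y h => by rwa [hammingDist_comm]⟩
  loopless := ⟨fun x h => by simp [hammingDist_self] at h⟩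

namespace SimpleGraph

variable {V W ι : Type*}

def oddDegreeVerts (G : SimpleGraph V) : Set V := {v | Odd (G.neighborSet v).ncard}

lemma oddDegreeVerts_eq_setOf_odd_degree (G : SimpleGraph V) [G.LocallyFinite] :
    G.oddDegreeVerts = {v | Odd (G.degree v)} := by
  ext v
  simp only [oddDegreeVerts, Set.mem_ofPred_eq, ← card_neighborSet_eq_degree,
    ← Nat.card_coe_set_eq, Nat.card_eq_fintype_card]

namespace Iso

variable {G : SimpleGraph V} {G' : SimpleGraph W}

lemma ncard_edgeSet_eq (e : G ≃g G') : G.edgeSet.ncard = G'.edgeSet.ncard := by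
  simpa only [Nat.card_coe_set_eq] using Nat.card_congr e.mapEdgeSet

lemma ncard_neighborSet_eq (e : G ≃g G') (v : V) :
    (G.neighborSet v).ncard = (G'.neighborSet (e v)).ncard := by
  simpa only [Nat.card_coe_set_eq] using Nat.card_congr (e.mapNeighborSet v)

lemma ncard_oddDegreeVerts_eq (e : G ≃g G') :
    G.oddDegreeVerts.ncard = G'.oddDegreeVerts.ncard := by
  have : e '' G.oddDegreeVerts = G'.oddDegreeVerts := by
    ext w
    obtain ⟨v, rfl⟩ := e.surjective w
    simp [oddDegreeVerts, e.ncard_neighborSet_eq]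
  rw [← this, Set.ncard_image_of_injective _ e.injective]

end Iso

namespace Subgraph

variable {G : SimpleGraph V} {H : SimpleGraph W} (G' : G.Subgraph)

lemma ncard_edgeSet_coe : G'.coe.edgeSet.ncard = G'.edgeSet.ncard := by
  rw [← G'.image_coe_edgeSet_coe,
    Set.ncard_image_of_injective _ (Sym2.map.injective Subtype.val_injective)]

lemma neighborSet_spanningCoe (v : V) : G'.spanningCoe.neighborSet v = G'.neighborSet v := rfl

lemma ncard_neighborSet_coe (v : G'.verts) :
    (G'.coe.neighborSet v).ncard = (G'.neighborSet v).ncard := by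
  simpa only [Nat.card_coe_set_eq] using Nat.card_congr (G'.coeNeighborSetEquiv v)

lemma oddDegreeVerts_spanningCoe :
    G'.spanningCoe.oddDegreeVerts = Subtype.val '' G'.coe.oddDegreeVerts := by
  ext v
  constructor
  · intro hv
    obtain ⟨w, hw⟩ := Set.nonempty_of_ncard_ne_zero hv.pos.ne'
    refine ⟨⟨v, G'.edge_vert hw⟩, ?_, rfl⟩
    simpa [oddDegreeVerts, neighborSet_spanningCoe, ncard_neighborSet_coe] using hv
  · rintro ⟨v, hv, rfl⟩
    simpa [oddDegreeVerts, neighborSet_spanningCoe, ncard_neighborSet_coe] using hv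

lemma ncard_oddDegreeVerts_coe :
    G'.coe.oddDegreeVerts.ncard = G'.spanningCoe.oddDegreeVerts.ncard := by
  rw [oddDegreeVerts_spanningCoe, Set.ncard_image_of_injective _ Subtype.val_injective]

lemma ncard_edgeSet_eq_of_iso (e : H ≃g G'.coe) : G'.edgeSet.ncard = H.edgeSet.ncard := by
  rw [← G'.ncard_edgeSet_coe, e.ncard_edgeSet_eq]

lemma ncard_oddDegreeVerts_eq_of_iso (e : H ≃g G'.coe) :
    G'.spanningCoe.oddDegreeVerts.ncard = H.oddDegreeVerts.ncard := by
  rw [← G'.ncard_oddDegreeVerts_coe, e.ncard_oddDegreeVerts_eq]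

end Subgraph

def IsEdgeDecomposition {G : SimpleGraph V} (f : ι → G.Subgraph) : Prop :=
  ∀ e ∈ G.edgeSet, ∃! i, e ∈ (f i).edgeSet

namespace IsEdgeDecomposition

variable {G : SimpleGraph V} {f : ι → G.Subgraph}

lemma pairwise_disjoint_edgeSet (hf : IsEdgeDecomposition f) :
    Pairwise fun i j => Disjoint (f i).edgeSet (f j).edgeSet := by
  intro i j hij
  rw [Set.disjoint_left]
  intro e hi hj
  exact hij ((hf e ((f i).edgeSet_subset hi)).unique hi hj)

lemma iUnion_edgeSet (hf : IsEdgeDecomposition f) : ⋃ i, (f i).edgeSet = G.edgeSet :=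
  (Set.iUnion_subset fun i => (f i).edgeSet_subset).antisymm
    fun e he => Set.mem_iUnion.mpr (hf e he).exists

lemma pairwise_disjoint_neighborSet (hf : IsEdgeDecomposition f) (v : V) :
    Pairwise fun i j => Disjoint ((f i).neighborSet v) ((f j).neighborSet v) := by
  intro i j hij
  rw [Set.disjoint_left]
  intro w hi hj
  exact Set.disjoint_left.mp (hf.pairwise_disjoint_edgeSet hij)
    (Subgraph.mem_edgeSet.mpr hi) (Subgraph.mem_edgeSet.mpr hj)

lemma iUnion_neighborSet (hf : IsEdgeDecomposition f) (v : V) :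
    ⋃ i, (f i).neighborSet v = G.neighborSet v := by
  ext w
  simp only [Set.mem_iUnion, Subgraph.mem_neighborSet, mem_neighborSet, ← Subgraph.mem_edgeSet,
    ← mem_edgeSet, ← hf.iUnion_edgeSet]

lemma finite_index [Finite G.edgeSet] (hf : IsEdgeDecomposition f)
    (hne : ∀ i, (f i).edgeSet.Nonempty) : Finite ι := by
  choose e he using hne
  refine Finite.of_injective (fun i => (⟨e i, (f i).edgeSet_subset (he i)⟩ : G.edgeSet))
    fun i j hij => ?_
  have hij : e i = e j := congrArg Subtype.val hij
  exact (hf (e i) ((f i).edgeSet_subset (he i))).unique (he i) (hij ▸ he j)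

variable [Finite V] [Fintype ι]

lemma sum_ncard_edgeSet (hf : IsEdgeDecomposition f) :
    ∑ i, (f i).edgeSet.ncard = G.edgeSet.ncard := by
  rw [← hf.iUnion_edgeSet, Set.ncard_iUnion_of_finite (fun _ => Set.toFinite _)
    hf.pairwise_disjoint_edgeSet, finsum_eq_sum_of_fintype]

lemma sum_ncard_neighborSet (hf : IsEdgeDecomposition f) (v : V) :
    ∑ i, ((f i).neighborSet v).ncard = (G.neighborSet v).ncard := by
  rw [← hf.iUnion_neighborSet, Set.ncard_iUnion_of_finite (fun _ => Set.toFinite _)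
    (hf.pairwise_disjoint_neighborSet v), finsum_eq_sum_of_fintype]

lemma oddDegreeVerts_subset_iUnion (hf : IsEdgeDecomposition f) :
    G.oddDegreeVerts ⊆ ⋃ i, (f i).spanningCoe.oddDegreeVerts := by
  intro v hv
  by_contra h
  simp only [Set.mem_iUnion, not_exists] at h
  rw [oddDegreeVerts, Set.mem_ofPred_eq, ← hf.sum_ncard_neighborSet v] at hv
  exact Nat.not_even_iff_odd.mpr hv (Finset.even_sum _ fun i _ => Nat.not_odd_iff_even.mp (h i))

end IsEdgeDecomposition

end SimpleGraph

theorem GraphDivides.ncard_oddDegreeVerts_mul_le {α β : Type} {H : SimpleGraph α}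
    {G : SimpleGraph β} [Finite β] (h : GraphDivides H G) :
    G.oddDegreeVerts.ncard * H.edgeSet.ncard ≤ H.oddDegreeVerts.ncard * G.edgeSet.ncard := by
  obtain ⟨ι, f, hiso, hf⟩ := h
  replace hf : IsEdgeDecomposition f := hf
  have e i : H ≃g (f i).coe := (hiso i).some
  rcases Nat.eq_zero_or_pos H.edgeSet.ncard with hm | hm
  · simp [hm]
  have : Finite ι := hf.finite_index fun i => Set.nonempty_of_ncard_ne_zero <| by
    rw [(f i).ncard_edgeSet_eq_of_iso (e i)]; exact hm.ne'
  have := Fintype.ofFinite ι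
  have hedges : G.edgeSet.ncard = Fintype.card ι * H.edgeSet.ncard := by
    simp [← hf.sum_ncard_edgeSet, fun i => (f i).ncard_edgeSet_eq_of_iso (e i)]
  have hodd : G.oddDegreeVerts.ncard ≤ Fintype.card ι * H.oddDegreeVerts.ncard := calc
    G.oddDegreeVerts.ncard ≤ (⋃ i, (f i).spanningCoe.oddDegreeVerts).ncard :=
      Set.ncard_le_ncard hf.oddDegreeVerts_subset_iUnion
    _ ≤ ∑ i, (f i).spanningCoe.oddDegreeVerts.ncard := Set.ncard_iUnion_le_of_fintype _
    _ = Fintype.card ι * H.oddDegreeVerts.ncard := by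
      simp [fun i => (f i).ncard_oddDegreeVerts_eq_of_iso (e i)]
  calc G.oddDegreeVerts.ncard * H.edgeSet.ncard
      ≤ Fintype.card ι * H.oddDegreeVerts.ncard * H.edgeSet.ncard := Nat.mul_le_mul_right _ hodd
    _ = H.oddDegreeVerts.ncard * G.edgeSet.ncard := by rw [hedges]; ring

instance (n : ℕ) : DecidableRel (cube n).Adj :=
  fun x y => inferInstanceAs (Decidable (hammingDist x y = 1))

instance (n : ℕ) : DecidableRel (pathGraph n).Adj :=
  fun _ _ => decidable_of_iff _ pathGraph_adj.symm

lemma cube_three_oddDegreeVerts : (cube 3).oddDegreeVerts = Set.univ := by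
  rw [oddDegreeVerts_eq_setOf_odd_degree, Set.eq_univ_iff_forall]
  decide

lemma ncard_edgeSet_cube_three : (cube 3).edgeSet.ncard = 12 := by
  rw [Set.ncard_eq_toFinset_card']
  decide

lemma pathGraph_seven_oddDegreeVerts : (pathGraph 7).oddDegreeVerts = {0, 6} := by
  rw [oddDegreeVerts_eq_setOf_odd_degree]
  ext v
  revert v
  decide

lemma ncard_edgeSet_pathGraph_seven : (pathGraph 7).edgeSet.ncard = 6 := by
  rw [Set.ncard_eq_toFinset_card']
  decide

theorem path6_not_divides_cube3 : ¬ GraphDivides (pathGraph 7) (cube 3) := by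
  intro h
  have := h.ncard_oddDegreeVerts_mul_le
  rw [cube_three_oddDegreeVerts, pathGraph_seven_oddDegreeVerts, ncard_edgeSet_cube_three,
    ncard_edgeSet_pathGraph_seven, Set.ncard_univ, Set.ncard_pair (by decide)] at this
  simp at this
end

section
/- The path P_4 with 4 edges divides the 5-dimensional hypercube Q_5. -/
/-!
The cyclic group of order 10 generated by the cyclic shift of coordinates and by complementation
acts on `Q_5` by automorphisms, freely on its 80 edges, which fall into 8 orbits of size 10.
Two paths of length 4 whose eight edges lie in eight distinct orbits therefore give, together
with their ten images each, 20 edge-disjoint paths covering every edge of `Q_5`.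
-/

open SimpleGraph

theorem hammingDist_comp_equiv {ι β : Type*} [Fintype ι] [DecidableEq β] (σ : Equiv.Perm ι)
    (x y : ι → β) : hammingDist (x ∘ σ) (y ∘ σ) = hammingDist x y := by
  simp only [hammingDist, Finset.card_filter]
  exact Equiv.sum_comp σ fun i => if x i ≠ y i then 1 else 0

namespace SimpleGraph

variable {V : Type*} {G : SimpleGraph V} {n : ℕ}

theorem edgeSet_pathGraph (n : ℕ) :
    (pathGraph (n + 1)).edgeSet = Set.range fun j : Fin n => s(j.castSucc, j.succ) := by
  ext e
  induction e using Sym2.ind with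
  | _ u v =>
    simp only [mem_edgeSet, pathGraph_adj, Set.mem_range, Sym2.eq_iff]
    constructor
    · rintro (h | h)
      · exact ⟨⟨u, by omega⟩, .inl ⟨Fin.ext rfl, Fin.ext (by simp; omega)⟩⟩
      · exact ⟨⟨v, by omega⟩, .inr ⟨Fin.ext rfl, Fin.ext (by simp; omega)⟩⟩
    · rintro ⟨j, ⟨rfl, rfl⟩ | ⟨rfl, rfl⟩⟩ <;> simp

def Copy.pathGraphOfAdj (p : Fin (n + 1) → V) (hp : Function.Injective p)
    (hadj : ∀ j : Fin n, G.Adj (p j.castSucc) (p j.succ)) : Copy (pathGraph (n + 1)) G where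
  toHom := ⟨p, fun {u v} huv => by
    have huv' : s(u, v) ∈ (pathGraph (n + 1)).edgeSet := huv
    obtain ⟨j, hj⟩ := edgeSet_pathGraph n ▸ huv'
    rcases Sym2.eq_iff.1 hj with ⟨rfl, rfl⟩ | ⟨rfl, rfl⟩
    · exact hadj j
    · exact (hadj j).symm⟩
  injective' := hp

end SimpleGraph

theorem GraphDivides.of_copies {α β ι : Type} {H : SimpleGraph α} {G : SimpleGraph β}
    (f : ι → Copy H G) (hcover : ∀ e ∈ G.edgeSet, ∃ i, e ∈ Sym2.map (f i) '' H.edgeSet)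
    (hdisj : ∀ i i', ∀ e ∈ Sym2.map (f i) '' H.edgeSet,
      e ∈ Sym2.map (f i') '' H.edgeSet → i = i') :
    GraphDivides H G := by
  refine ⟨ι, fun i => (f i).toSubgraph, fun i => ⟨(f i).isoToSubgraph⟩, fun e he => ?_⟩
  simp only [Copy.toSubgraph, Subgraph.edgeSet_map, Subgraph.edgeSet_top]
  obtain ⟨i, hi⟩ := hcover e he
  exact ⟨i, hi, fun i' hi' => hdisj i' i e hi' hi⟩

theorem GraphDivides.pathGraph_of_copies {β ι : Type} {G : SimpleGraph β} {n : ℕ}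
    (f : ι → Copy (pathGraph (n + 1)) G)
    (hcover : ∀ x y, G.Adj x y → ∃ i, ∃ j : Fin n, s(f i j.castSucc, f i j.succ) = s(x, y))
    (hdisj : ∀ i i' (j j' : Fin n),
      s(f i j.castSucc, f i j.succ) = s(f i' j'.castSucc, f i' j'.succ) → i = i') :
    GraphDivides (pathGraph (n + 1)) G := by
  have hedges (i : ι) : Sym2.map (f i) '' (pathGraph (n + 1)).edgeSet =
      Set.range fun j : Fin n => s(f i j.castSucc, f i j.succ) := by
    rw [edgeSet_pathGraph, ← Set.range_comp]
    rfl
  refine GraphDivides.of_copies f (fun e he => ?_) ?_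
  · induction e using Sym2.ind with
    | _ x y =>
      obtain ⟨i, j, hj⟩ := hcover x y he
      exact ⟨i, hedges i ▸ ⟨j, hj⟩⟩
  · rintro i i' e he he'
    rw [hedges] at he he'
    obtain ⟨j, rfl⟩ := he
    obtain ⟨j', hj'⟩ := he'
    exact hdisj i i' j j' hj'.symm

namespace cube

variable {n : ℕ}

instance : DecidableRel (cube n).Adj :=
  fun x y => inferInstanceAs (Decidable (hammingDist x y = 1))

def permIso (σ : Equiv.Perm (Fin n)) : cube n ≃g cube n where
  toEquiv := σ.arrowCongr (Equiv.refl _)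
  map_rel_iff' {x y} := by
    show hammingDist (x ∘ σ.symm) (y ∘ σ.symm) = 1 ↔ hammingDist x y = 1
    rw [hammingDist_comp_equiv]

def addIso (v : Fin n → ZMod 2) : cube n ≃g cube n where
  toEquiv := Equiv.addRight v
  map_rel_iff' {x y} := by
    show hammingDist (fun i => x i + v i) (fun i => y i + v i) = 1 ↔ hammingDist x y = 1
    rw [hammingDist_comp (fun i => (· + v i)) fun i => add_left_injective (v i)]

def shiftComplIso [NeZero n] (k : Fin n) (ε : ZMod 2) : cube n ≃g cube n :=
  (permIso (Equiv.addRight k)).trans (addIso fun _ => ε)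

end cube

def basePath : Fin 2 → Fin 5 → Fin 5 → ZMod 2 :=
  ![![![0, 0, 0, 0, 0], ![1, 0, 0, 0, 0], ![1, 1, 0, 0, 0], ![0, 1, 0, 0, 0], ![0, 1, 0, 1, 0]],
    ![![1, 0, 0, 0, 0], ![1, 0, 0, 1, 0], ![1, 1, 0, 1, 0], ![1, 1, 0, 0, 0], ![1, 1, 1, 0, 0]]]

theorem basePath_injective : ∀ b, Function.Injective (basePath b) := by decide

theorem basePath_adj :
    ∀ b (j : Fin 4), (cube 5).Adj (basePath b j.castSucc) (basePath b j.succ) := by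
  decide

def cube5PathCopy (i : Fin 2 × Fin 5 × ZMod 2) : Copy (pathGraph 5) (cube 5) :=
  (cube.shiftComplIso i.2.1 i.2.2).toCopy.comp
    (Copy.pathGraphOfAdj _ (basePath_injective i.1) (basePath_adj i.1))

theorem cube5PathCopy_cover : ∀ x y : Fin 5 → ZMod 2, (cube 5).Adj x y →
    ∃ i, ∃ j : Fin 4, s(cube5PathCopy i j.castSucc, cube5PathCopy i j.succ) = s(x, y) := by
  decide +kernel

theorem cube5PathCopy_disjoint : ∀ i i' (j j' : Fin 4),
    s(cube5PathCopy i j.castSucc, cube5PathCopy i j.succ) =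
      s(cube5PathCopy i' j'.castSucc, cube5PathCopy i' j'.succ) → i = i' := by
  decide +kernel

theorem path4_divides_cube5 : GraphDivides (pathGraph 5) (cube 5) :=
  GraphDivides.pathGraph_of_copies cube5PathCopy cube5PathCopy_cover cube5PathCopy_disjoint
end
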